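/- Let s > 0, and let k ∈ ℕ be the integer with s ∈ [k−1, k). Let α ∈ ℝ, β > s−1, and n ∈ ℕ. Then for every x ∈ (−1, 1), D_−^s[ (1+·)^β P_n^{(α,β)} ](x) = [Γ(n+β+1)/Γ(n+β−s+1)] · (1+x)^{β−s} · P_n^{(α+s, β−s)}(x). Equivalently, in terms of the generalized Jacobi functions, D_−^s[^−J_n^{(α,−β)}] = [Γ(n+β+1)/Γ(n+β−s+1)] · ^−J_n^{(α+s, −β+s)} on (−1,1). -/

import Mathlib

/-!
Expanding `P_n^{(α,β)}` in powers of `(1+x)/2` (which the defining sum yields by Chu–Vandermonde)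
writes `(1+x)^β P_n^{(α,β)}(x)` as a combination of the powers `(1+x)^(β+j)`, `0 ≤ j ≤ n`.
A Beta integral gives `I_-^ρ (1+·)^μ = Γ(μ+1)/Γ(μ+1+ρ) (1+x)^(μ+ρ)`, and differentiating `k` times
gives `D_-^s (1+·)^μ = Γ(μ+1)/Γ(μ+1-s) (1+x)^(μ-s)`. For `μ = β + j` the factor
`Γ(β+j+1)/Γ(β+j+1-s)` turns `(β+j+1)_{n-j}` into `Γ(n+β+1)/Γ(n+β-s+1) · (β-s+j+1)_{n-j}`, while
`n+α+β+1` is unchanged, so the coefficients become those of `P_n^{(α+s,β-s)}`.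
-/

open MeasureTheory Filter Finset

/-- Jacobi polynomial with real parameters. -/
noncomputable def jacobiP (a b : ℝ) (n : ℕ) (x : ℝ) : ℝ :=
  ∑ j ∈ Finset.range (n + 1),
    ((ascPochhammer ℝ j).eval ((n : ℝ) + a + b + 1) / (Nat.factorial j : ℝ)) *
      ((ascPochhammer ℝ (n - j)).eval (a + (j : ℝ) + 1) / (Nat.factorial (n - j) : ℝ)) *
      ((x - 1) / 2) ^ j

/-- Right Riemann-Liouville fractional integral on (-1,1). -/
noncomputable def Iplus (ρ : ℝ) (v : ℝ → ℝ) (x : ℝ) : ℝ :=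
  (1 / Real.Gamma ρ) * ∫ y in x..1, (y - x) ^ (ρ - 1) * v y

/-- Left Riemann-Liouville fractional integral on (-1,1). -/
noncomputable def Iminus (ρ : ℝ) (v : ℝ → ℝ) (x : ℝ) : ℝ :=
  (1 / Real.Gamma ρ) * ∫ y in (-1 : ℝ)..x, (x - y) ^ (ρ - 1) * v y

/-- Right Riemann-Liouville fractional derivative of order `s ∈ [k-1,k)`. -/
noncomputable def Dplus (s : ℝ) (k : ℕ) (v : ℝ → ℝ) (x : ℝ) : ℝ :=
  (-1 : ℝ) ^ k * iteratedDeriv k (Iplus ((k : ℝ) - s) v) x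

/-- Left Riemann-Liouville fractional derivative of order `s ∈ [k-1,k)`. -/
noncomputable def Dminus (s : ℝ) (k : ℕ) (v : ℝ → ℝ) (x : ℝ) : ℝ :=
  iteratedDeriv k (Iminus ((k : ℝ) - s) v) x

/-- Generalized Jacobi function `⁻J_n^{(α,-β)}(x) = (1+x)^β P_n^{(α,β)}(x)` (for `β > -1`). -/
noncomputable def GJFminus (α β : ℝ) (n : ℕ) (x : ℝ) : ℝ :=
  (1 + x) ^ β * jacobiP α β n x

open Polynomial
open scoped Nat

theorem descPochhammer_eval_add {R : Type*} [CommRing R] (r : ℕ) (x y : R) :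
    (descPochhammer R r).eval (x + y) = ∑ i ∈ range (r + 1),
      (r.choose i : R) * (descPochhammer R i).eval x * (descPochhammer R (r - i)).eval y := by
  have hsmeval (k : ℕ) (z : R) :
      (descPochhammer ℤ k).smeval z = (descPochhammer R k).eval z := by
    rw [← aeval_eq_smeval, aeval_def, ← eval_map, descPochhammer_map]
  rw [← hsmeval, Ring.descPochhammer_smeval_add r (Commute.all x y),
    Nat.sum_antidiagonal_eq_sum_range_succ
      (fun i j => (r.choose i : R) *
        ((descPochhammer ℤ i).smeval x * (descPochhammer ℤ j).smeval y))]
  simp only [hsmeval, mul_assoc]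

theorem descPochhammer_eval_neg {R : Type*} [CommRing R] (x : R) (k : ℕ) :
    (descPochhammer R k).eval (-x) = (-1) ^ k * (ascPochhammer R k).eval x := by
  rw [← neg_neg x, ascPochhammer_eval_neg_eq_descPochhammer, neg_neg, ← mul_assoc, ← mul_pow,
    neg_one_mul, neg_neg, one_pow, one_mul]

theorem ascPochhammer_eval_add {R : Type*} [CommSemiring R] (x : R) (m i : ℕ) :
    (ascPochhammer R (m + i)).eval x =
      (ascPochhammer R m).eval x * (ascPochhammer R i).eval (x + m) := by
  simp [← ascPochhammer_mul]

theorem Real.Gamma_add_nat {z : ℝ} (hz : 0 < z) (k : ℕ) :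
    Real.Gamma (z + k) = Real.Gamma z * (ascPochhammer ℝ k).eval z := by
  induction k with
  | zero => simp
  | succ k ih =>
    rw [Nat.cast_succ, ← add_assoc, Real.Gamma_add_one (by positivity), ih,
      ascPochhammer_succ_eval]
    ring

theorem ascPochhammer_eval_eq_Gamma_div {z : ℝ} (hz : 0 < z) (k : ℕ) :
    (ascPochhammer ℝ k).eval z = Real.Gamma (z + k) / Real.Gamma z := by
  rw [Real.Gamma_add_nat hz, mul_div_cancel_left₀ _ (Real.Gamma_pos_of_pos hz).ne']

theorem descPochhammer_eval_eq_Gamma_div {z : ℝ} (hz : 0 < z) (k : ℕ) :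
    (descPochhammer ℝ k).eval (z + k - 1) = Real.Gamma (z + k) / Real.Gamma z := by
  rw [descPochhammer_eval_eq_ascPochhammer, show z + k - 1 - k + 1 = z by ring,
    ascPochhammer_eval_eq_Gamma_div hz]

noncomputable def jacobiCoeff (a b : ℝ) (n j : ℕ) : ℝ :=
  (-1) ^ (n - j) * ((ascPochhammer ℝ j).eval ((n : ℝ) + a + b + 1) / (j ! : ℝ)) *
    ((ascPochhammer ℝ (n - j)).eval (b + j + 1) / ((n - j) ! : ℝ))

theorem sum_jacobiP_coeff_mul_choose (a b : ℝ) {n m : ℕ} (hm : m ≤ n) :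
    ∑ j ∈ range (n + 1),
      (ascPochhammer ℝ j).eval ((n : ℝ) + a + b + 1) / (j ! : ℝ) *
        ((ascPochhammer ℝ (n - j)).eval (a + j + 1) / ((n - j) ! : ℝ)) *
        ((j.choose m : ℝ) * (-1) ^ (j - m)) = jacobiCoeff a b n m := by
  set c : ℝ := (n : ℝ) + a + b + 1
  obtain ⟨r, rfl⟩ := Nat.exists_eq_add_of_le hm
  -- Writing `j = m + i`, the sum over `i` is Chu–Vandermonde at `-(c + m)` and `a + m + r`.
  have hterm : ∀ i ∈ range (r + 1),
      (ascPochhammer ℝ (m + i)).eval c / ((m + i) ! : ℝ) *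
        ((ascPochhammer ℝ (m + r - (m + i))).eval (a + (m + i : ℕ) + 1) /
          ((m + r - (m + i)) ! : ℝ)) *
        (((m + i).choose m : ℝ) * (-1) ^ (m + i - m))
      = (ascPochhammer ℝ m).eval c / (m ! : ℝ) / (r ! : ℝ) *
          ((r.choose i : ℝ) * (descPochhammer ℝ i).eval (-(c + m)) *
            (descPochhammer ℝ (r - i)).eval (a + m + r)) := by
    intro i hi
    have hir : i ≤ r := Nat.lt_succ_iff.mp (mem_range.mp hi)
    rw [Nat.add_sub_cancel_left, Nat.add_sub_add_left, descPochhammer_eval_neg,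
      descPochhammer_eval_eq_ascPochhammer, ascPochhammer_eval_add,
      show a + m + r - ((r - i : ℕ) : ℝ) + 1 = a + (m + i : ℕ) + 1 by
        push_cast [Nat.cast_sub hir]; ring]
    have hfac₁ : ((m + i) ! : ℝ) = (m + i).choose m * m ! * i ! := by
      rw [Nat.choose_symm_add]
      exact_mod_cast (Nat.add_choose_mul_factorial_mul_factorial m i).symm
    have hfac₂ : (r ! : ℝ) = r.choose i * i ! * (r - i) ! := by
      exact_mod_cast (Nat.choose_mul_factorial_mul_factorial hir).symm
    have hchoose₁ : ((m + i).choose m : ℝ) ≠ 0 := by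
      exact_mod_cast (Nat.choose_pos (by omega)).ne'
    have hchoose₂ : (r.choose i : ℝ) ≠ 0 := by exact_mod_cast (Nat.choose_pos hir).ne'
    rw [hfac₁, hfac₂]
    field_simp
  rw [add_assoc m r 1, sum_range_add, sum_eq_zero fun j hj => by
      rw [Nat.choose_eq_zero_of_lt (mem_range.mp hj), Nat.cast_zero, zero_mul, mul_zero],
    zero_add, sum_congr rfl hterm, ← mul_sum, ← descPochhammer_eval_add,
    show -(c + m) + (a + m + r) = -(b + m + 1) by simp only [c]; push_cast; ring,
    descPochhammer_eval_neg, jacobiCoeff, Nat.add_sub_cancel_left]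
  ring

theorem jacobiP_eq_sum_jacobiCoeff (a b : ℝ) (n : ℕ) (x : ℝ) :
    jacobiP a b n x = ∑ m ∈ range (n + 1), jacobiCoeff a b n m * ((1 + x) / 2) ^ m := by
  have hexpand : ∀ j ∈ range (n + 1), ((x - 1) / 2) ^ j =
      ∑ m ∈ range (n + 1), ((j.choose m : ℝ) * (-1) ^ (j - m)) * ((1 + x) / 2) ^ m := by
    intro j hj
    rw [show (x - 1) / 2 = (1 + x) / 2 + -1 by ring, add_pow,
      ← sum_subset (range_subset_range.mpr (mem_range.mp hj)) fun m _ hm => by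
        rw [Nat.choose_eq_zero_of_lt (by simpa using hm), Nat.cast_zero, zero_mul, zero_mul]]
    exact sum_congr rfl fun m _ => by ring
  rw [jacobiP, sum_congr rfl fun j hj => by rw [hexpand j hj, mul_sum], sum_comm]
  refine sum_congr rfl fun m hm => ?_
  simp_rw [← mul_assoc, ← sum_mul]
  rw [← sum_jacobiP_coeff_mul_choose a b (Nat.lt_succ_iff.mp (mem_range.mp hm))]
  simp only [mul_assoc]

theorem jacobiCoeff_mul_Gamma_div (a : ℝ) {b s : ℝ} {n j : ℕ} (hj : j ≤ n) (hb : -1 < b)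
    (hbs : s - 1 < b) :
    jacobiCoeff a b n j * (Real.Gamma (b + j + 1) / Real.Gamma (b + j + 1 - s)) =
      Real.Gamma (n + b + 1) / Real.Gamma (n + b - s + 1) * jacobiCoeff (a + s) (b - s) n j := by
  have hj₀ : (0 : ℝ) ≤ j := j.cast_nonneg
  have hz₁ : 0 < b + j + 1 := by linarith
  have hz₂ : 0 < b - s + j + 1 := by linarith
  rw [jacobiCoeff, jacobiCoeff, ascPochhammer_eval_eq_Gamma_div hz₁,
    ascPochhammer_eval_eq_Gamma_div hz₂, Nat.cast_sub hj,
    show b + j + 1 + (n - j) = n + b + 1 by ring,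
    show b - s + j + 1 + (n - j) = n + b - s + 1 by ring,
    show (n : ℝ) + (a + s) + (b - s) + 1 = n + a + b + 1 by ring,
    show b - s + j + 1 = b + j + 1 - s by ring]
  have hn : (j : ℝ) ≤ n := by exact_mod_cast hj
  field_simp [(Real.Gamma_pos_of_pos hz₁).ne',
    (Real.Gamma_pos_of_pos (by linarith : 0 < b + j + 1 - s)).ne',
    (Real.Gamma_pos_of_pos (by linarith : 0 < n + b - s + 1)).ne']

theorem GJFminus_eqOn_sum (a b : ℝ) (n : ℕ) :
    Set.EqOn (GJFminus a b n)
      (fun y => ∑ j ∈ range (n + 1), jacobiCoeff a b n j / 2 ^ j * (1 + y) ^ (b + j))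
      (Set.Ioi (-1)) := by
  intro y hy
  have hy' : 0 < 1 + y := neg_lt_iff_pos_add'.mp hy
  rw [GJFminus, jacobiP_eq_sum_jacobiCoeff, mul_sum]
  refine sum_congr rfl fun j _ => ?_
  rw [Real.rpow_add hy', Real.rpow_natCast, div_pow]
  ring

theorem integral_rpow_mul_one_sub_rpow {p q : ℝ} (hp : 0 < p) (hq : 0 < q) :
    ∫ t in (0 : ℝ)..1, t ^ (p - 1) * (1 - t) ^ (q - 1) =
      Real.Gamma p * Real.Gamma q / Real.Gamma (p + q) := by
  have hbeta : Complex.betaIntegral p q =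
      ((∫ t in (0 : ℝ)..1, t ^ (p - 1) * (1 - t) ^ (q - 1) : ℝ) : ℂ) := by
    rw [Complex.betaIntegral, ← intervalIntegral.integral_ofReal]
    refine intervalIntegral.integral_congr fun t ht => ?_
    rw [Set.uIcc_of_le zero_le_one] at ht
    push_cast
    rw [Complex.ofReal_cpow ht.1, Complex.ofReal_cpow (sub_nonneg.mpr ht.2)]
    push_cast
    ring
  have h := Complex.Gamma_mul_Gamma_eq_betaIntegral (s := p) (t := q)
    (by simpa using hp) (by simpa using hq)
  rw [hbeta, ← Complex.ofReal_add, Complex.Gamma_ofReal, Complex.Gamma_ofReal,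
    Complex.Gamma_ofReal] at h
  have hΓ : Real.Gamma (p + q) ≠ 0 := (Real.Gamma_pos_of_pos (add_pos hp hq)).ne'
  rw [eq_div_iff hΓ, mul_comm]
  exact_mod_cast h.symm

theorem intervalIntegrable_sub_rpow_mul_one_add_rpow {ρ μ x : ℝ} (hρ : 0 < ρ) (hμ : -1 < μ)
    (hx : -1 < x) :
    IntervalIntegrable (fun y => (x - y) ^ (ρ - 1) * (1 + y) ^ μ) volume (-1) x := by
  have hleft (a b : ℝ) : IntervalIntegrable (fun y : ℝ => (1 + y) ^ μ) volume a b := by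
    simpa [add_comm] using
      (intervalIntegral.intervalIntegrable_rpow' (a := a + 1) (b := b + 1) hμ).comp_add_right 1
  have hright (a b : ℝ) : IntervalIntegrable (fun y : ℝ => (x - y) ^ (ρ - 1)) volume a b := by
    simpa using (intervalIntegral.intervalIntegrable_rpow' (a := x - a) (b := x - b)
      (by linarith : -1 < ρ - 1)).comp_sub_left x
  obtain ⟨m, hm₁, hm₂⟩ := exists_between hx
  refine IntervalIntegrable.trans (b := m) ((hleft _ _).continuousOn_mul ?_)
    ((hright _ _).mul_continuousOn ?_)
  · refine ContinuousOn.rpow_const (by fun_prop) fun y hy => Or.inl ?_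
    rw [Set.uIcc_of_le hm₁.le] at hy
    exact (sub_pos.mpr (hy.2.trans_lt hm₂)).ne'
  · refine ContinuousOn.rpow_const (by fun_prop) fun y hy => Or.inl ?_
    rw [Set.uIcc_of_le hm₂.le] at hy
    exact (neg_lt_iff_pos_add'.mp (hm₁.trans_le hy.1)).ne'

theorem integral_sub_rpow_mul_one_add_rpow {ρ μ x : ℝ} (hρ : 0 < ρ) (hμ : -1 < μ)
    (hx : -1 < x) :
    ∫ y in (-1 : ℝ)..x, (x - y) ^ (ρ - 1) * (1 + y) ^ μ =
      Real.Gamma (μ + 1) * Real.Gamma ρ / Real.Gamma (μ + 1 + ρ) * (1 + x) ^ (μ + ρ) := by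
  set c := 1 + x
  have hc : 0 < c := by linarith
  have hpoint : ∀ t ∈ Set.uIcc (0 : ℝ) 1,
      (x - (c * t - 1)) ^ (ρ - 1) * (1 + (c * t - 1)) ^ μ =
        c ^ (ρ - 1 + μ) * (t ^ (μ + 1 - 1) * (1 - t) ^ (ρ - 1)) := by
    intro t ht
    rw [Set.uIcc_of_le zero_le_one] at ht
    rw [show x - (c * t - 1) = c * (1 - t) by ring, show 1 + (c * t - 1) = c * t by ring,
      Real.mul_rpow hc.le (sub_nonneg.mpr ht.2), Real.mul_rpow hc.le ht.1, add_sub_cancel_right,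
      Real.rpow_add hc]
    ring
  have hsub := intervalIntegral.integral_comp_mul_sub
    (fun y => (x - y) ^ (ρ - 1) * (1 + y) ^ μ) hc.ne' (a := 0) (b := 1) 1
  rw [intervalIntegral.integral_congr hpoint, intervalIntegral.integral_const_mul,
    integral_rpow_mul_one_sub_rpow (by linarith) hρ, mul_zero, mul_one, zero_sub,
    show c - 1 = x by ring, smul_eq_mul, eq_inv_mul_iff_mul_eq₀ hc.ne'] at hsub
  rw [← hsub, show μ + ρ = ρ - 1 + μ + 1 by ring, Real.rpow_add_one hc.ne']
  ring

theorem Iminus_sum_one_add_rpow {ι : Type*} (t : Finset ι) (c μ : ι → ℝ) {ρ x : ℝ} (hρ : 0 < ρ)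
    (hμ : ∀ j ∈ t, -1 < μ j) (hx : -1 < x) :
    Iminus ρ (fun y => ∑ j ∈ t, c j * (1 + y) ^ μ j) x =
      ∑ j ∈ t, c j * (Real.Gamma (μ j + 1) / Real.Gamma (μ j + 1 + ρ)) *
        (1 + x) ^ (μ j + ρ) := by
  have hexpand (y : ℝ) : (x - y) ^ (ρ - 1) * ∑ j ∈ t, c j * (1 + y) ^ μ j =
      ∑ j ∈ t, c j * ((x - y) ^ (ρ - 1) * (1 + y) ^ μ j) := by
    rw [mul_sum]
    exact sum_congr rfl fun _ _ => by ring
  rw [Iminus]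
  simp_rw [hexpand]
  rw [intervalIntegral.integral_finsetSum fun j hj =>
      (intervalIntegrable_sub_rpow_mul_one_add_rpow hρ (hμ j hj) hx).const_mul (c j), mul_sum]
  refine sum_congr rfl fun j hj => ?_
  rw [intervalIntegral.integral_const_mul, integral_sub_rpow_mul_one_add_rpow hρ (hμ j hj) hx]
  field_simp [(Real.Gamma_pos_of_pos hρ).ne']

theorem iteratedDeriv_one_add_rpow (p : ℝ) (k : ℕ) :
    iteratedDeriv k (fun z => (1 + z) ^ p) =
      fun x => (descPochhammer ℝ k).eval p * (1 + x) ^ (p - k) := by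
  rw [iteratedDeriv_comp_const_add k (fun z => z ^ p) 1, iteratedDeriv_eq_iterate]
  exact funext fun x => Real.iter_deriv_rpow_const p (1 + x) k

theorem Dminus_congr {s x : ℝ} {k : ℕ} {v w : ℝ → ℝ} (h : Set.EqOn v w (Set.Ioi (-1)))
    (hx : -1 < x) : Dminus s k v x = Dminus s k w x := by
  refine Filter.EventuallyEq.iteratedDeriv_eq k ?_
  filter_upwards [Ioi_mem_nhds hx] with z hz
  rw [Iminus, Iminus, intervalIntegral.integral_congr_ae (Eventually.of_forall fun y hy => ?_)]
  rw [Set.uIoc_of_le hz.le] at hy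
  rw [h hy.1]

theorem Dminus_sum_one_add_rpow {ι : Type*} (t : Finset ι) (c μ : ι → ℝ) {s x : ℝ} {k : ℕ}
    (hsk : s < k) (hμ : ∀ j ∈ t, -1 < μ j) (hμs : ∀ j ∈ t, s - 1 < μ j) (hx : -1 < x) :
    Dminus s k (fun y => ∑ j ∈ t, c j * (1 + y) ^ μ j) x =
      ∑ j ∈ t, c j * (Real.Gamma (μ j + 1) / Real.Gamma (μ j + 1 - s)) *
        (1 + x) ^ (μ j - s) := by
  have hρ : 0 < (k : ℝ) - s := sub_pos.mpr hsk
  have hI : Iminus (k - s) (fun y => ∑ j ∈ t, c j * (1 + y) ^ μ j) =ᶠ[nhds x] fun z =>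
      ∑ j ∈ t, c j * (Real.Gamma (μ j + 1) / Real.Gamma (μ j + 1 + (k - s))) *
        (1 + z) ^ (μ j + (k - s)) := by
    filter_upwards [Ioi_mem_nhds hx] with z hz using Iminus_sum_one_add_rpow t c μ hρ hμ hz
  have hsmooth : ∀ j ∈ t, ContDiffAt ℝ k (fun z => c j *
      (Real.Gamma (μ j + 1) / Real.Gamma (μ j + 1 + (k - s))) * (1 + z) ^ (μ j + (k - s))) x :=
    fun j _ => contDiffAt_const.mul <|
      (Real.contDiffAt_rpow_const_of_ne (by linarith)).comp x (contDiffAt_const.add contDiffAt_id)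
  rw [Dminus, hI.iteratedDeriv_eq, iteratedDeriv_fun_sum hsmooth]
  refine sum_congr rfl fun j hj => ?_
  have hz : 0 < μ j + 1 - s := by linarith [hμs j hj]
  rw [iteratedDeriv_const_mul_field, iteratedDeriv_one_add_rpow,
    show μ j + (k - s) = (μ j + 1 - s) + k - 1 by ring, descPochhammer_eval_eq_Gamma_div hz,
    show μ j + 1 - s + k - 1 - k = μ j - s by ring,
    show μ j + 1 + (k - s) = μ j + 1 - s + k by ring]
  field_simp [(Real.Gamma_pos_of_pos hz).ne']

theorem stmt9_general (s : ℝ) (hs : 0 < s) (k : ℕ) (hk2 : s < k)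
    (α β : ℝ) (hβ : s - 1 < β) (n : ℕ) :
    ∀ x ∈ Set.Ioo (-1 : ℝ) 1,
      Dminus s k (GJFminus α β n) x =
        Real.Gamma ((n : ℝ) + β + 1) / Real.Gamma ((n : ℝ) + β - s + 1) *
          GJFminus (α + s) (β - s) n x ∧
      Dminus s k (fun y => (1 + y) ^ β * jacobiP α β n y) x =
        Real.Gamma ((n : ℝ) + β + 1) / Real.Gamma ((n : ℝ) + β - s + 1) *
          ((1 + x) ^ (β - s) * jacobiP (α + s) (β - s) n x) := by
  intro x hx
  have hβ₀ : -1 < β := by linarith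
  have key : Dminus s k (GJFminus α β n) x =
      Real.Gamma ((n : ℝ) + β + 1) / Real.Gamma ((n : ℝ) + β - s + 1) *
        GJFminus (α + s) (β - s) n x := by
    rw [Dminus_congr (GJFminus_eqOn_sum α β n) hx.1,
      Dminus_sum_one_add_rpow _ _ _ hk2 (fun j _ => by linarith [j.cast_nonneg (α := ℝ)])
        (fun j _ => by linarith [j.cast_nonneg (α := ℝ)]) hx.1,
      GJFminus_eqOn_sum (α + s) (β - s) n hx.1, mul_sum]
    refine sum_congr rfl fun j hj => ?_
    rw [show β + j - s = β - s + j by ring]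
    linear_combination (1 + x) ^ (β - s + j) / 2 ^ j *
      jacobiCoeff_mul_Gamma_div α (Nat.lt_succ_iff.mp (mem_range.mp hj)) hβ₀ hβ
  exact ⟨key, key⟩

/-- Theorem 3.1, left fractional derivative of GJFs. -/
theorem stmt9 (s : ℝ) (hs : 0 < s) (k : ℕ) (hk1 : (k : ℝ) - 1 ≤ s) (hk2 : s < k)
    (α β : ℝ) (hβ : s - 1 < β) (n : ℕ) :
    ∀ x ∈ Set.Ioo (-1 : ℝ) 1,
      Dminus s k (GJFminus α β n) x =
        Real.Gamma ((n : ℝ) + β + 1) / Real.Gamma ((n : ℝ) + β - s + 1) *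
          GJFminus (α + s) (β - s) n x ∧
      Dminus s k (fun y => (1 + y) ^ β * jacobiP α β n y) x =
        Real.Gamma ((n : ℝ) + β + 1) / Real.Gamma ((n : ℝ) + β - s + 1) *
          ((1 + x) ^ (β - s) * jacobiP (α + s) (β - s) n x) :=
  stmt9_general s hs k hk2 α β hβ n
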